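/- arXiv:2201.05854 — 2 statements merged into one kernel-verified Lean document; each statement's English description precedes it below -/
import Mathlib

section
/- Fix real numbers δv > 0, 0 < δz < 2, c > 0, and an integer N ≥ 2, and let W = X⁻¹Y. Then for all 1 ≤ q, q' ≤ N−1, the absolute value of the entry W_{q,q'} equals the sum of the absolute values of its three constituents: |W_{q,q'}| = |(X⁻¹)_{q,q'−1}|·|y₃| + |(X⁻¹)_{q,q'}|·|y₂| + |(X⁻¹)_{q,q'+1}|·|y₁|, where (X⁻¹)_{q,q'} is taken to be 0 whenever q' ∉ {1, …, N−1}. -/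
/-- Tridiagonal Toeplitz matrix of size `n × n` with diagonal value `a`,
subdiagonal value `b` and superdiagonal value `d`. -/
def tridiag (n : ℕ) (b a d : ℝ) : Matrix (Fin n) (Fin n) ℝ :=
  Matrix.of fun q q' : Fin n =>
    if (q : ℤ) = (q' : ℤ) then a
    else if (q : ℤ) = (q' : ℤ) + 1 then b
    else if (q : ℤ) + 1 = (q' : ℤ) then d
    else 0

/-- The matrix `X` of the fully discrete Crank–Nicolson compact scheme. -/
noncomputable def Xmat (N : ℕ) (δv δz : ℝ) : Matrix (Fin (N - 1)) (Fin (N - 1)) ℝ :=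
  tridiag (N - 1) ((2 + δz) / (24 * δv)) (5 / (6 * δv)) ((2 - δz) / (24 * δv))

/-- The matrix `Y` of the fully discrete Crank–Nicolson compact scheme. -/
noncomputable def Ymat (N : ℕ) (δz c : ℝ) : Matrix (Fin (N - 1)) (Fin (N - 1)) ℝ :=
  tridiag (N - 1) (-(c / (4 * δz)) - (c + c * δz ^ 2 / 12) / (2 * δz ^ 2))
    ((c + c * δz ^ 2 / 12) / δz ^ 2)
    (c / (4 * δz) - (c + c * δz ^ 2 / 12) / (2 * δz ^ 2))

/-- `W = X⁻¹ Y`. -/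
noncomputable def Wmat (N : ℕ) (δv δz c : ℝ) : Matrix (Fin (N - 1)) (Fin (N - 1)) ℝ :=
  (Xmat N δv δz)⁻¹ * Ymat N δz c

/-- The entry `A_{q,j}` of a matrix where the column index `j : ℤ` may lie
outside the index range, in which case the value is `0`. -/
noncomputable def entryExt {n : ℕ} (A : Matrix (Fin n) (Fin n) ℝ) (q : Fin n)
    (j : ℤ) : ℝ :=
  ∑ j' : Fin n, if (j' : ℤ) = j then A q j' else 0

/-!
Conjugation by `D = diag((-1)^i)` flips the signs of the off-diagonal entries of a
tridiagonal matrix, so `D X D` is a Z-matrix with positive row sums. By the minimum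
principle its inverse is entrywise nonnegative, hence `X⁻¹ = D (D X D)⁻¹ D` has the
checkerboard sign pattern `(-1)^(i+j)`. As `y₁, y₃ < 0 < y₂`, the matrix `Y` has the same
pattern, so all summands of `(X⁻¹Y)_{qq'} = ∑ₖ (X⁻¹)_{qk} Y_{kq'}` carry the sign
`(-1)^(q+q')` and nothing cancels.
-/

open Matrix Finset

namespace Matrix

section ZMatrix

def IsZMatrix {ι α : Type*} [Zero α] [LE α] (A : Matrix ι ι α) : Prop :=
  ∀ i j, i ≠ j → A i j ≤ 0

variable {ι 𝕜 : Type*} [Fintype ι] [Field 𝕜] [LinearOrder 𝕜] [IsStrictOrderedRing 𝕜]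
  {A : Matrix ι ι 𝕜}

theorem IsZMatrix.nonneg_of_mulVec_nonneg (hA : IsZMatrix A) (hrow : ∀ i, 0 < ∑ j, A i j)
    {x : ι → 𝕜} (hx : 0 ≤ A *ᵥ x) : 0 ≤ x := by
  intro i
  by_contra! hi
  change x i < 0 at hi
  obtain ⟨i₀, -, hmin⟩ := exists_min_image univ x ⟨i, mem_univ i⟩
  have hneg : x i₀ < 0 := (hmin i (mem_univ i)).trans_lt hi
  have hle : (A *ᵥ x) i₀ ≤ (∑ j, A i₀ j) * x i₀ := by
    rw [mulVec, dotProduct, sum_mul]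
    refine sum_le_sum fun j _ => ?_
    rcases eq_or_ne i₀ j with rfl | hj
    · rfl
    · exact mul_le_mul_of_nonpos_left (hmin j (mem_univ j)) (hA i₀ j hj)
  linarith [show 0 ≤ (A *ᵥ x) i₀ from hx i₀, mul_neg_of_pos_of_neg (hrow i₀) hneg]

theorem IsZMatrix.det_ne_zero [DecidableEq ι] (hA : IsZMatrix A)
    (hrow : ∀ i, 0 < ∑ j, A i j) : A.det ≠ 0 := by
  rw [Ne, ← exists_mulVec_eq_zero_iff]
  rintro ⟨v, hv, hAv⟩
  have hpos : 0 ≤ v := hA.nonneg_of_mulVec_nonneg hrow hAv.ge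
  have hneg : 0 ≤ -v := hA.nonneg_of_mulVec_nonneg hrow (by rw [mulVec_neg, hAv, neg_zero])
  exact hv (le_antisymm (neg_nonneg.mp hneg) hpos)

theorem IsZMatrix.inv_apply_nonneg [DecidableEq ι] (hA : IsZMatrix A)
    (hrow : ∀ i, 0 < ∑ j, A i j) (i j : ι) : 0 ≤ A⁻¹ i j := by
  have hcol : A *ᵥ (fun k => A⁻¹ k j) = Pi.single j 1 := by
    funext k
    change ∑ l, A k l * A⁻¹ l j = _
    rw [← mul_apply, mul_nonsing_inv _ (hA.det_ne_zero hrow).isUnit, one_apply,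
      Pi.single_apply]
  refine hA.nonneg_of_mulVec_nonneg hrow (x := fun k => A⁻¹ k j) ?_ i
  rw [hcol]
  exact Pi.single_nonneg.mpr zero_le_one

end ZMatrix

section Checkerboard

variable {R : Type*} [CommRing R] {n : ℕ}

variable (R n) in
def altSignDiag : Matrix (Fin n) (Fin n) R :=
  diagonal fun i => (-1) ^ (i : ℕ)

theorem altSignDiag_mul_self : altSignDiag R n * altSignDiag R n = 1 := by
  rw [altSignDiag, diagonal_mul_diagonal, ← diagonal_one]
  congr 1
  funext i
  rw [← pow_add, ← two_mul, pow_mul, neg_one_sq, one_pow]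

theorem altSignDiag_conj_apply (M : Matrix (Fin n) (Fin n) R) (i j : Fin n) :
    (altSignDiag R n * M * altSignDiag R n) i j = (-1) ^ ((i : ℕ) + j) * M i j := by
  rw [altSignDiag, mul_diagonal, diagonal_mul, pow_add]
  ring

theorem altSignDiag_conj_inv (M : Matrix (Fin n) (Fin n) R) :
    altSignDiag R n * M⁻¹ * altSignDiag R n = (altSignDiag R n * M * altSignDiag R n)⁻¹ := by
  rw [mul_inv_rev, mul_inv_rev, inv_eq_left_inv altSignDiag_mul_self, mul_assoc]

def IsCheckerboard [LinearOrder R] (A : Matrix (Fin n) (Fin n) R) : Prop :=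
  ∀ i j : Fin n, 0 ≤ (-1) ^ ((i : ℕ) + j) * A i j

variable [LinearOrder R] {A B : Matrix (Fin n) (Fin n) R}

theorem isCheckerboard_iff_altSignDiag_conj :
    IsCheckerboard A ↔ ∀ i j, 0 ≤ (altSignDiag R n * A * altSignDiag R n) i j := by
  simp only [altSignDiag_conj_apply, IsCheckerboard]

variable [IsStrictOrderedRing R]

theorem IsCheckerboard.abs_apply (hA : IsCheckerboard A) (i j : Fin n) :
    |A i j| = (-1) ^ ((i : ℕ) + j) * A i j := by
  rw [← abs_of_nonneg (hA i j), abs_mul, abs_neg_one_pow, one_mul]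

theorem IsCheckerboard.abs_mul_apply (hA : IsCheckerboard A) (hB : IsCheckerboard B)
    (i j : Fin n) : |(A * B) i j| = (A.map abs * B.map abs) i j := by
  have hsign : (A.map abs * B.map abs) i j = (-1) ^ ((i : ℕ) + j) * (A * B) i j := by
    simp only [mul_apply, map_apply, hA.abs_apply, hB.abs_apply, mul_sum]
    refine sum_congr rfl fun k _ => ?_
    have hk : ((-1 : R) ^ (k : ℕ)) ^ 2 = 1 := by rw [← pow_mul, pow_mul', neg_one_sq, one_pow]
    linear_combination (-1 : R) ^ (i : ℕ) * (-1) ^ (j : ℕ) * A i k * B k j * hk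
  calc |(A * B) i j| = |(-1) ^ ((i : ℕ) + j) * (A * B) i j| := by
        rw [abs_mul, abs_neg_one_pow, one_mul]
    _ = (A.map abs * B.map abs) i j := by
        rw [← hsign]
        refine abs_of_nonneg ?_
        rw [mul_apply]
        exact sum_nonneg fun k _ => mul_nonneg (abs_nonneg _) (abs_nonneg _)

end Checkerboard

end Matrix

section Tridiag

variable {n : ℕ} {b a d : ℝ}

theorem tridiag_map (f : ℝ → ℝ) (hf : f 0 = 0) :
    (tridiag n b a d).map f = tridiag n (f b) (f a) (f d) := by
  ext i j
  simp only [tridiag, map_apply, of_apply]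
  split_ifs <;> first | rfl | exact hf

theorem altSignDiag_conj_tridiag :
    altSignDiag ℝ n * tridiag n b a d * altSignDiag ℝ n = tridiag n (-b) a (-d) := by
  ext i j
  rw [altSignDiag_conj_apply]
  simp only [tridiag, of_apply]
  split_ifs
  · rw [Even.neg_one_pow ⟨j, by omega⟩, one_mul]
  · rw [Odd.neg_one_pow ⟨j, by omega⟩, neg_one_mul]
  · rw [Odd.neg_one_pow ⟨i, by omega⟩, neg_one_mul]
  · rw [mul_zero]

theorem le_sum_ite_intCast_eq {c : ℝ} (hc : c ≤ 0) (m : ℤ) :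
    c ≤ ∑ j : Fin n, if (j : ℤ) = m then c else 0 := by
  rw [← sum_filter, sum_const, nsmul_eq_mul]
  have hcard : #{j : Fin n | (j : ℤ) = m} ≤ 1 :=
    card_le_one.mpr fun j hj k hk => Fin.ext (by simp only [mem_filter] at hj hk; omega)
  have hcard' : (#{j : Fin n | (j : ℤ) = m} : ℝ) ≤ 1 := by exact_mod_cast hcard
  nlinarith

theorem add_add_le_sum_tridiag_apply (hb : b ≤ 0) (hd : d ≤ 0) (i : Fin n) :
    b + a + d ≤ ∑ j, tridiag n b a d i j := by
  have hsplit : ∀ j : Fin n, tridiag n b a d i j = (if (j : ℤ) = i - 1 then b else 0) +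
      (if j = i then a else 0) + (if (j : ℤ) = i + 1 then d else 0) := by
    intro j
    simp only [tridiag, of_apply, ← Fin.val_inj]
    split_ifs <;> first | omega | ring
  rw [sum_congr rfl fun j _ => hsplit j, sum_add_distrib, sum_add_distrib, sum_ite_eq',
    if_pos (mem_univ i)]
  linarith [le_sum_ite_intCast_eq (n := n) hb (i - 1), le_sum_ite_intCast_eq (n := n) hd (i + 1)]

theorem isCheckerboard_tridiag (hb : b ≤ 0) (ha : 0 ≤ a) (hd : d ≤ 0) :
    IsCheckerboard (tridiag n b a d) := by
  rw [isCheckerboard_iff_altSignDiag_conj, altSignDiag_conj_tridiag]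
  intro i j
  simp only [tridiag, of_apply]
  split_ifs <;> linarith

theorem isCheckerboard_inv_tridiag (hb : 0 ≤ b) (hd : 0 ≤ d) (hbd : b + d < a) :
    IsCheckerboard (tridiag n b a d)⁻¹ := by
  rw [isCheckerboard_iff_altSignDiag_conj, altSignDiag_conj_inv, altSignDiag_conj_tridiag]
  refine IsZMatrix.inv_apply_nonneg (fun i j hij => ?_) (fun i => ?_)
  · have hij' : (i : ℤ) ≠ j := fun h => hij (Fin.ext (by omega))
    simp only [tridiag, of_apply, if_neg hij']
    split_ifs <;> linarith
  · linarith [add_add_le_sum_tridiag_apply (n := n) (a := a) (neg_nonpos.2 hb) (neg_nonpos.2 hd) i]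

theorem entryExt_natCast (M : Matrix (Fin n) (Fin n) ℝ) (q j : Fin n) :
    entryExt M q (j : ℤ) = M q j := by
  simp [entryExt, Fin.val_inj]

theorem entryExt_map (M : Matrix (Fin n) (Fin n) ℝ) (f : ℝ → ℝ) (hf : f 0 = 0) (q : Fin n)
    (m : ℤ) : entryExt (M.map f) q m = f (entryExt M q m) := by
  by_cases h : ∃ j : Fin n, (j : ℤ) = m
  · obtain ⟨j, rfl⟩ := h
    rw [entryExt_natCast, entryExt_natCast, map_apply]
  · push Not at h
    simp [entryExt, h, hf]

theorem mul_tridiag_apply (M : Matrix (Fin n) (Fin n) ℝ) (q q' : Fin n) :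
    (M * tridiag n b a d) q q' =
      entryExt M q (q' - 1) * d + M q q' * a + entryExt M q (q' + 1) * b := by
  rw [← entryExt_natCast M q q']
  simp only [entryExt, mul_apply, sum_mul, ← sum_add_distrib, ite_mul, zero_mul]
  refine sum_congr rfl fun k _ => ?_
  simp only [tridiag, of_apply]
  split_ifs <;> first | omega | ring

end Tridiag

theorem stmt7_general (δv δz c : ℝ) (hδv : 0 < δv) (hδz : 0 < δz) (hδz2 : δz < 2)
    (hc : 0 < c) (N : ℕ) :
    ∀ q q' : Fin (N - 1),
      |Wmat N δv δz c q q'| =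
        |entryExt (Xmat N δv δz)⁻¹ q ((q' : ℤ) - 1)| *
            |c / (4 * δz) - (c + c * δz ^ 2 / 12) / (2 * δz ^ 2)| +
          |(Xmat N δv δz)⁻¹ q q'| * |(c + c * δz ^ 2 / 12) / δz ^ 2| +
          |entryExt (Xmat N δv δz)⁻¹ q ((q' : ℤ) + 1)| *
            |-(c / (4 * δz)) - (c + c * δz ^ 2 / 12) / (2 * δz ^ 2)| := by
  intro q q'
  have hX : IsCheckerboard (Xmat N δv δz)⁻¹ := by
    refine isCheckerboard_inv_tridiag (by positivity) (div_nonneg (by linarith) (by positivity)) ?_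
    rw [← add_div, div_lt_div_iff₀ (by positivity) (by positivity)]
    linarith
  have hY : IsCheckerboard (Ymat N δz c) := by
    have hy₃ : c / (4 * δz) - (c + c * δz ^ 2 / 12) / (2 * δz ^ 2) =
        -(c * ((δz - 3) ^ 2 + 3)) / (24 * δz ^ 2) := by
      field_simp
      ring
    refine isCheckerboard_tridiag ?_ (by positivity) ?_
    · have : 0 ≤ c / (4 * δz) := by positivity
      have : 0 ≤ (c + c * δz ^ 2 / 12) / (2 * δz ^ 2) := by positivity
      linarith
    · rw [hy₃]
      exact div_nonpos_of_nonpos_of_nonneg (neg_nonpos.2 (by positivity)) (by positivity)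
  rw [Wmat, hX.abs_mul_apply hY, Ymat, tridiag_map _ abs_zero, mul_tridiag_apply,
    entryExt_map _ _ abs_zero, entryExt_map _ _ abs_zero, map_apply]

/-- the absolute value of each entry of `W = X⁻¹Y` equals the sum of
the absolute values of its three constituents, entries of `X⁻¹` out of range
being taken as `0`. -/
theorem stmt7 (δv δz c : ℝ) (hδv : 0 < δv) (hδz : 0 < δz) (hδz2 : δz < 2)
    (hc : 0 < c) (N : ℕ) (hN : 2 ≤ N) :
    ∀ q q' : Fin (N - 1),
      |Wmat N δv δz c q q'| =
        |entryExt (Xmat N δv δz)⁻¹ q ((q' : ℤ) - 1)| *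
            |c / (4 * δz) - (c + c * δz ^ 2 / 12) / (2 * δz ^ 2)| +
          |(Xmat N δv δz)⁻¹ q q'| * |(c + c * δz ^ 2 / 12) / δz ^ 2| +
          |entryExt (Xmat N δv δz)⁻¹ q ((q' : ℤ) + 1)| *
            |-(c / (4 * δz)) - (c + c * δz ^ 2 / 12) / (2 * δz ^ 2)| :=
  stmt7_general δv δz c hδv hδz hδz2 hc N
end

section
/- Fix real numbers δv > 0, 0 < δz < 2, c > 0 and an integer N ≥ 2, and let W = X⁻¹Y be the matrix of the fully discrete Crank–Nicolson compact scheme. Then the spectral norm of W satisfies ‖W‖₂ ≤ √(12/5) · (2c/δz² + c/6) · δv. -/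
/-!
Both matrices are strictly diagonally dominant tridiagonal Toeplitz matrices. By the Schur test
(row and column sums of absolute values), `‖Y‖₂ ≤ |y₁| + |y₂| + |y₃| = 2c/δz² + c/6`. Writing
`X = c₂ I + B` with `‖B‖₂ ≤ |c₁| + |c₃|` gives `‖Xv‖ ≥ (c₂ - |c₁| - |c₃|) ‖v‖ = 2‖v‖/(3δv)`, hence
`‖X⁻¹‖₂ ≤ 3δv/2 ≤ √(12/5) δv`, and `‖W‖₂ ≤ ‖X⁻¹‖₂ ‖Y‖₂`.
-/

open Matrix
open scoped Matrix.Norms.L2Operator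

/-- The spectral norm (`L²` operator norm) of a real square matrix: the operator
norm of the induced linear map on the Euclidean space. -/
noncomputable def spectralNorm2 {n : ℕ} (A : Matrix (Fin n) (Fin n) ℝ) : ℝ :=
  ‖Matrix.toEuclideanCLM (𝕜 := ℝ) A‖

lemma norm_sum_mul_sq_le {ι 𝕜 : Type*} [Fintype ι] [RCLike 𝕜] (a x : ι → 𝕜) :
    ‖∑ j, a j * x j‖ ^ 2 ≤ (∑ j, ‖a j‖) * ∑ j, ‖a j‖ * ‖x j‖ ^ 2 := by
  calc ‖∑ j, a j * x j‖ ^ 2 ≤ (∑ j, ‖a j‖ * ‖x j‖) ^ 2 := by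
        gcongr
        exact (norm_sum_le _ _).trans_eq (by simp_rw [norm_mul])
    _ ≤ _ := Finset.sum_sq_le_sum_mul_sum_of_sq_le_mul _ (fun j _ => norm_nonneg _)
        (fun j _ => by positivity) (fun j _ => (by ring : _ = _).le)

lemma sum_ite_le_of_subsingleton {ι : Type*} [Fintype ι] {p : ι → Prop} [DecidablePred p]
    (hp : ∀ i j, p i → p j → i = j) {c : ℝ} (hc : 0 ≤ c) :
    ∑ i, (if p i then c else 0) ≤ c := by
  rw [Finset.sum_ite, Finset.sum_const_zero, add_zero, Finset.sum_const, nsmul_eq_mul]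
  have hcard : ((Finset.univ.filter p).card : ℝ) ≤ 1 := by
    exact_mod_cast Finset.card_le_one.2 fun i hi j hj =>
      hp i j (Finset.mem_filter.1 hi).2 (Finset.mem_filter.1 hj).2
  nlinarith

namespace Matrix

variable {𝕜 : Type*} [RCLike 𝕜] {n : Type*} [Fintype n] [DecidableEq n]

-- Schur test: Cauchy–Schwarz in each row with weights `‖A i j‖`.
lemma l2_opNorm_le_of_sum_norm_le (A : Matrix n n 𝕜) {K : ℝ} (hK : 0 ≤ K)
    (hrow : ∀ i, ∑ j, ‖A i j‖ ≤ K) (hcol : ∀ j, ∑ i, ‖A i j‖ ≤ K) : ‖A‖ ≤ K := by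
  rw [cstar_norm_def]
  refine ContinuousLinearMap.opNorm_le_bound _ hK fun x => ?_
  refine (sq_le_sq₀ (norm_nonneg _) (by positivity)).mp ?_
  rw [EuclideanSpace.norm_sq_eq, mul_pow, EuclideanSpace.norm_sq_eq]
  calc ∑ i, ‖(toEuclideanCLM (𝕜 := 𝕜) A x) i‖ ^ 2
      ≤ ∑ i, (∑ j, ‖A i j‖) * ∑ j, ‖A i j‖ * ‖x j‖ ^ 2 :=
        Finset.sum_le_sum fun i _ => norm_sum_mul_sq_le (A i) x
    _ ≤ ∑ i, K * ∑ j, ‖A i j‖ * ‖x j‖ ^ 2 := by gcongr with i; exact hrow i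
    _ = K * ∑ j, (∑ i, ‖A i j‖) * ‖x j‖ ^ 2 := by
        rw [← Finset.mul_sum, Finset.sum_comm]; simp_rw [Finset.sum_mul]
    _ ≤ K * ∑ j, K * ‖x j‖ ^ 2 := by gcongr with j; exact hcol j
    _ = K ^ 2 * ∑ j, ‖x j‖ ^ 2 := by rw [← Finset.mul_sum, ← mul_assoc, sq]

lemma l2_opNorm_inv_le_of_lower_bound (A : Matrix n n 𝕜) {μ : ℝ} (hμ : 0 < μ)
    (h : ∀ x, μ * ‖x‖ ≤ ‖toEuclideanCLM (𝕜 := 𝕜) A x‖) : ‖A⁻¹‖ ≤ μ⁻¹ := by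
  have hA : IsUnit A := by
    rw [← mulVec_injective_iff_isUnit]
    intro u v huv
    have hzero := h (WithLp.toLp 2 (u - v))
    rw [toEuclideanCLM_toLp, mulVec_sub, huv, sub_self, WithLp.toLp_zero, norm_zero] at hzero
    simpa [sub_eq_zero] using nonpos_of_mul_nonpos_right hzero hμ
  have hright (y) : toEuclideanCLM (𝕜 := 𝕜) A (toEuclideanCLM (𝕜 := 𝕜) A⁻¹ y) = y := by
    simpa using congrArg (fun M => toEuclideanCLM (𝕜 := 𝕜) M y)
      (mul_nonsing_inv A ((isUnit_iff_isUnit_det A).mp hA))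
  rw [cstar_norm_def]
  refine ContinuousLinearMap.opNorm_le_bound _ (inv_nonneg.2 hμ.le) fun y => ?_
  rw [inv_mul_eq_div, le_div_iff₀' hμ]
  simpa only [hright] using h (toEuclideanCLM (𝕜 := 𝕜) A⁻¹ y)

lemma l2_opNorm_inv_smul_one_add_le (a : 𝕜) (B : Matrix n n 𝕜) (h : ‖B‖ < ‖a‖) :
    ‖(a • 1 + B)⁻¹‖ ≤ (‖a‖ - ‖B‖)⁻¹ := by
  refine l2_opNorm_inv_le_of_lower_bound _ (sub_pos.2 h) fun x => ?_
  have hBx : ‖toEuclideanCLM (𝕜 := 𝕜) B x‖ ≤ ‖B‖ * ‖x‖ :=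
    (toEuclideanCLM (𝕜 := 𝕜) B).le_opNorm x
  have hsub := norm_sub_norm_le (a • x) (-toEuclideanCLM (𝕜 := 𝕜) B x)
  rw [norm_neg, sub_neg_eq_add, norm_smul] at hsub
  simp only [map_add, map_smul, map_one, _root_.add_apply, _root_.smul_apply, one_apply_eq_self]
  nlinarith

end Matrix

section tridiag

variable {n : ℕ} (b a d : ℝ)

lemma tridiag_transpose : (tridiag n b a d)ᵀ = tridiag n d a b := by
  ext i j
  simp only [tridiag, transpose_apply, of_apply]
  split_ifs <;> first | rfl | omega

lemma tridiag_eq_smul_one_add : tridiag n b a d = a • 1 + tridiag n b 0 d := by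
  ext i j
  simp only [tridiag, of_apply, Matrix.add_apply, Matrix.smul_apply, one_apply, smul_eq_mul,
    Fin.ext_iff]
  split_ifs <;> first | omega | simp

lemma abs_tridiag_apply_le (i j : Fin n) :
    |tridiag n b a d i j| ≤ (if (i : ℤ) = j then |a| else 0) + (if (i : ℤ) = j + 1 then |b| else 0)
      + (if (i : ℤ) + 1 = j then |d| else 0) := by
  simp only [tridiag, of_apply]
  split_ifs <;> first | omega | simp

lemma sum_abs_tridiag_le (i : Fin n) : ∑ j, |tridiag n b a d i j| ≤ |a| + |b| + |d| := by
  refine (Finset.sum_le_sum fun j _ => abs_tridiag_apply_le b a d i j).trans ?_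
  rw [Finset.sum_add_distrib, Finset.sum_add_distrib]
  gcongr
  · exact sum_ite_le_of_subsingleton (fun j k hj hk => Fin.ext (by omega)) (abs_nonneg a)
  · exact sum_ite_le_of_subsingleton (fun j k hj hk => Fin.ext (by omega)) (abs_nonneg b)
  · exact sum_ite_le_of_subsingleton (fun j k hj hk => Fin.ext (by omega)) (abs_nonneg d)

lemma norm_tridiag_le : ‖tridiag n b a d‖ ≤ |a| + |b| + |d| := by
  refine l2_opNorm_le_of_sum_norm_le _ (by positivity)
    (fun i => by simpa only [Real.norm_eq_abs] using sum_abs_tridiag_le b a d i) fun j => ?_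
  simpa only [Real.norm_eq_abs, ← transpose_apply (tridiag n b a d), tridiag_transpose,
    add_right_comm] using sum_abs_tridiag_le d a b j

lemma norm_tridiag_inv_le (h : |b| + |d| < |a|) :
    ‖(tridiag n b a d)⁻¹‖ ≤ (|a| - |b| - |d|)⁻¹ := by
  have hB : ‖tridiag n b 0 d‖ ≤ |b| + |d| := by simpa using norm_tridiag_le b 0 d
  rw [tridiag_eq_smul_one_add b a d]
  calc ‖(a • 1 + tridiag n b 0 d)⁻¹‖ ≤ (|a| - ‖tridiag n b 0 d‖)⁻¹ := by
        simpa only [Real.norm_eq_abs] using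
          l2_opNorm_inv_smul_one_add_le a (tridiag n b 0 d) (by rw [Real.norm_eq_abs]; linarith)
    _ ≤ (|a| - |b| - |d|)⁻¹ := inv_anti₀ (by linarith) (by linarith)

end tridiag

theorem stmt13_general (δv δz c : ℝ) (hδv : 0 < δv) (hδz : 0 < δz) (hδz2 : δz < 2)
    (hc : 0 < c) (N : ℕ) :
    spectralNorm2 (Wmat N δv δz c) ≤
      Real.sqrt (12 / 5) * (2 * c / δz ^ 2 + c / 6) * δv := by
  have hX : ‖(Xmat N δv δz)⁻¹‖ ≤ 3 * δv / 2 := by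
    have hdom :
        |5 / (6 * δv)| - |(2 + δz) / (24 * δv)| - |(2 - δz) / (24 * δv)| = 2 / (3 * δv) := by
      rw [abs_of_pos (by positivity), abs_of_pos (by positivity),
        abs_of_pos (div_pos (by linarith) (by positivity))]
      field_simp
      ring
    have h := norm_tridiag_inv_le (n := N - 1) _ _ _ (by
      rw [← sub_pos, sub_add_eq_sub_sub, hdom]; positivity)
    rwa [hdom, inv_div] at h
  have hY : ‖Ymat N δz c‖ ≤ 2 * c / δz ^ 2 + c / 6 := by
    have hy₃ : c / (4 * δz) ≤ (c + c * δz ^ 2 / 12) / (2 * δz ^ 2) := by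
      rw [div_le_div_iff₀ (by positivity) (by positivity)]
      nlinarith [mul_pos (mul_pos hc hδz) (sub_pos.2 hδz2), mul_pos hc (mul_pos hδz hδz)]
    refine (norm_tridiag_le _ _ _).trans_eq ?_
    rw [abs_of_pos (by positivity),
      abs_of_neg (by linarith [div_pos hc (by positivity : 0 < 4 * δz)]),
      abs_of_nonpos (by linarith)]
    field_simp
    ring
  have hsqrt : (3 : ℝ) / 2 ≤ Real.sqrt (12 / 5) := Real.le_sqrt_of_sq_le (by norm_num)
  calc spectralNorm2 (Wmat N δv δz c) = ‖(Xmat N δv δz)⁻¹ * Ymat N δz c‖ := rfl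
    _ ≤ ‖(Xmat N δv δz)⁻¹‖ * ‖Ymat N δz c‖ := norm_mul_le _ _
    _ ≤ 3 * δv / 2 * (2 * c / δz ^ 2 + c / 6) := by gcongr
    _ = 3 / 2 * (2 * c / δz ^ 2 + c / 6) * δv := by ring
    _ ≤ Real.sqrt (12 / 5) * (2 * c / δz ^ 2 + c / 6) * δv := by gcongr

/-- `‖W‖₂ ≤ √(12/5)·(2c/δz² + c/6)·δv`. -/
theorem stmt13 (δv δz c : ℝ) (hδv : 0 < δv) (hδz : 0 < δz) (hδz2 : δz < 2)
    (hc : 0 < c) (N : ℕ) (hN : 2 ≤ N) :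
    spectralNorm2 (Wmat N δv δz c) ≤
      Real.sqrt (12 / 5) * (2 * c / δz ^ 2 + c / 6) * δv :=
  stmt13_general δv δz c hδv hδz hδz2 hc N
end
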